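/- Let f : Ω → ℂ be a nonvanishing scalar C¹ function on an open set Ω ⊆ ℝ³, and let ρ : Ω → ℝ be a harmonic function (Δρ = 0) such that ⟨∇f, ∇ρ⟩ = 0 in Ω. Then the purely vectorial function F = f·Dρ satisfies DF + F·(Df/f) = 0, and G = (1/f)·Dρ satisfies DG − G·(Df/f) = 0. -/

import Mathlib

open Quaternion

noncomputable section

/-- Points of ℝ³. -/
abbrev P3 := EuclideanSpace ℝ (Fin 3)

/-- Partial derivative ∂ₖ of a complex-valued function on ℝ³. -/
def pd (k : Fin 3) (F : P3 → ℂ) : P3 → ℂ :=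
  fun p => fderiv ℝ F p (EuclideanSpace.single k 1)

/-- The Laplacian Δ = ∂₁² + ∂₂² + ∂₃². -/
def lap3 (F : P3 → ℂ) : P3 → ℂ := fun p => ∑ k : Fin 3, pd k (pd k F) p

/-- Embedding of a complex scalar as a quaternion. -/
def qC (z : ℂ) : ℍ[ℂ] := ⟨z, 0, 0, 0⟩

/-- The quaternionic imaginary units e₁, e₂, e₃. -/
def qe : Fin 3 → ℍ[ℂ] := ![⟨0,1,0,0⟩, ⟨0,0,1,0⟩, ⟨0,0,0,1⟩]

/-- The eₖ-components of a quaternion. -/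
def qcomp : Fin 3 → ℍ[ℂ] → ℂ := ![QuaternionAlgebra.imI, QuaternionAlgebra.imJ, QuaternionAlgebra.imK]

/-- Quaternionic conjugation C_H. -/
def CH (q : ℍ[ℂ]) : ℍ[ℂ] := ⟨q.re, -q.imI, -q.imJ, -q.imK⟩

/-- Componentwise partial derivative of a quaternion-valued function. -/
def pdq (k : Fin 3) (W : P3 → ℍ[ℂ]) : P3 → ℍ[ℂ] :=
  fun p => ⟨pd k (fun x => (W x).re) p, pd k (fun x => (W x).imI) p,
            pd k (fun x => (W x).imJ) p, pd k (fun x => (W x).imK) p⟩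

/-- The Dirac (Moisil–Theodorescu) operator D Q = Σₖ eₖ ∂ₖ Q. -/
def Dq (W : P3 → ℍ[ℂ]) : P3 → ℍ[ℂ] := fun p => ∑ k : Fin 3, qe k * pdq k W p

/-- The right Dirac operator Dᵣ Q = Σₖ (∂ₖ Q) eₖ. -/
def Drq (W : P3 → ℍ[ℂ]) : P3 → ℍ[ℂ] := fun p => ∑ k : Fin 3, pdq k W p * qe k

/-- Gradient of a scalar function viewed as a purely vectorial quaternion. -/
def gradq (F : P3 → ℂ) : P3 → ℍ[ℂ] := fun p => ⟨0, pd 0 F p, pd 1 F p, pd 2 F p⟩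

/-- Divergence of (the vector part of) a quaternion-valued function. -/
def divq (W : P3 → ℍ[ℂ]) : P3 → ℂ :=
  fun p => pd 0 (fun x => (W x).imI) p + pd 1 (fun x => (W x).imJ) p + pd 2 (fun x => (W x).imK) p

/-- Rotor (curl) of (the vector part of) a quaternion-valued function. -/
def rotq (W : P3 → ℍ[ℂ]) : P3 → ℍ[ℂ] :=
  fun p => ⟨0,
    pd 1 (fun x => (W x).imK) p - pd 2 (fun x => (W x).imJ) p,
    pd 2 (fun x => (W x).imI) p - pd 0 (fun x => (W x).imK) p,
    pd 0 (fun x => (W x).imJ) p - pd 1 (fun x => (W x).imI) p⟩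

/-- Cross product of the vector parts of two quaternions. -/
def crossq (u v : ℍ[ℂ]) : ℍ[ℂ] :=
  ⟨0, u.imJ * v.imK - u.imK * v.imJ, u.imK * v.imI - u.imI * v.imK, u.imI * v.imJ - u.imJ * v.imI⟩

/-- Bilinear scalar product of the vector parts of two quaternions. -/
def dotq (u v : ℍ[ℂ]) : ℂ := u.imI * v.imI + u.imJ * v.imJ + u.imK * v.imK

/-- `Cⁿ` smoothness of a quaternion-valued function on a set, componentwise. -/
def QContDiffOn (n : ℕ) (W : P3 → ℍ[ℂ]) (Ω : Set P3) : Prop :=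
  ContDiffOn ℝ n (fun p => (W p).re) Ω ∧ ContDiffOn ℝ n (fun p => (W p).imI) Ω ∧
  ContDiffOn ℝ n (fun p => (W p).imJ) Ω ∧ ContDiffOn ℝ n (fun p => (W p).imK) Ω

/-- The pure-quaternion Df/f built from a nonvanishing scalar function f. -/
def DfF (f : P3 → ℂ) : P3 → ℍ[ℂ] := fun p => (f p)⁻¹ • gradq f p

/-!
The Dirac operator obeys the Leibniz rule `D(g W) = (Dg) W + g DW` for scalar `g`, and
`D(Dρ) = -Δρ` because the curl of a gradient vanishes. For harmonic `ρ` this leaves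
`DF = Df Dρ` and `DG = D(1/f) Dρ = -f⁻² Df Dρ`, while `F (Df/f) = Dρ Df` and `G (Df/f) = f⁻² Dρ Df`.
Both identities thus reduce to the anticommutator of two vectors, `Df Dρ + Dρ Df = -2⟨∇f, ∇ρ⟩ = 0`.
-/

lemma pd_mul {u v : P3 → ℂ} {p : P3} (hu : DifferentiableAt ℝ u p)
    (hv : DifferentiableAt ℝ v p) (k : Fin 3) :
    pd k (fun x => u x * v x) p = pd k u p * v p + u p * pd k v p := by
  simp only [pd, fderiv_fun_mul hu hv, add_apply, smul_apply, smul_eq_mul]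
  ring

open ContinuousLinearMap in
lemma pd_inv {f : P3 → ℂ} {p : P3} (hf : DifferentiableAt ℝ f p) (hfp : f p ≠ 0) (k : Fin 3) :
    pd k (fun x => (f x)⁻¹) p = -((f p)⁻¹ ^ 2 * pd k f p) := by
  have hcomp : (fun x => (f x)⁻¹) = Inv.inv ∘ f := rfl
  simp only [pd, hcomp, fderiv_comp p (differentiableAt_inv (𝕜 := ℝ) hfp) hf, fderiv_inv' hfp,
    neg_comp, neg_apply, comp_apply, mulLeftRight_apply, neg_inj]
  ring

lemma pd_const (c : ℂ) (k : Fin 3) (p : P3) : pd k (fun _ => c) p = 0 := by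
  simp [pd]

lemma pd_comm {u : P3 → ℂ} {Ω : Set P3} (hΩ : IsOpen Ω) (hu : ContDiffOn ℝ 2 u Ω)
    {p : P3} (hp : p ∈ Ω) (j k : Fin 3) :
    pd j (pd k u) p = pd k (pd j u) p := by
  have hmem := hΩ.mem_nhds hp
  have hdf : DifferentiableAt ℝ (fderiv ℝ u) p :=
    ((hu.fderiv_of_isOpen (m := 1) hΩ (by norm_num)).differentiableOn one_ne_zero).differentiableAt
      hmem
  have hpd (v w : P3) : fderiv ℝ (fun x => fderiv ℝ u x w) p v = fderiv ℝ (fderiv ℝ u) p v w := by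
    simp [fderiv_clm_apply hdf (differentiableAt_const w)]
  change fderiv ℝ (fun x => fderiv ℝ u x _) p _ = fderiv ℝ (fun x => fderiv ℝ u x _) p _
  rw [hpd, hpd]
  exact (hu.contDiffAt hmem).isSymmSndFDerivAt (by norm_num) _ _

lemma pd_contDiffOn {u : P3 → ℂ} {Ω : Set P3} (hΩ : IsOpen Ω) (hu : ContDiffOn ℝ 2 u Ω)
    (k : Fin 3) : ContDiffOn ℝ 1 (pd k u) Ω :=
  (ContinuousLinearMap.apply ℝ ℂ (EuclideanSpace.single k (1 : ℝ))).contDiff.comp_contDiffOn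
    (hu.fderiv_of_isOpen (m := 1) hΩ (by norm_num))

/- Instance search misses these: the `•` of `ℍ[ℂ]` is the componentwise action, not the one
coming from `Algebra ℂ ℍ[ℂ]`. -/
instance : IsScalarTower ℂ ℍ[ℂ] ℍ[ℂ] :=
  ⟨fun c a b => by
    ext <;> simp only [smul_eq_mul, re_mul, imI_mul, imJ_mul, imK_mul, re_smul, imI_smul,
      imJ_smul, imK_smul] <;> ring⟩

instance : SMulCommClass ℂ ℍ[ℂ] ℍ[ℂ] :=
  ⟨fun c a b => by
    ext <;> simp only [smul_eq_mul, re_mul, imI_mul, imJ_mul, imK_mul, re_smul, imI_smul,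
      imJ_smul, imK_smul] <;> ring⟩

lemma qC_zero : qC 0 = 0 := rfl

lemma mul_add_mul_swap_of_re_eq_zero {a b : ℍ[ℂ]} (ha : a.re = 0) (hb : b.re = 0) :
    a * b + b * a = qC (-2 * dotq a b) := by
  ext <;> simp only [re_add, imI_add, imJ_add, imK_add, re_mul, imI_mul, imJ_mul, imK_mul, ha, hb,
    qC, dotq] <;> ring

/- Here and in `Dq_gradq` the quaternion operations are expanded before `qe` is unfolded:
Mathlib's simp lemmas for `ℍ[ℂ]` do not fire on the literals of `qe`. -/
lemma gradq_eq_sum (u : P3 → ℂ) (p : P3) : gradq u p = ∑ k, pd k u p • qe k := by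
  ext <;> simp only [Fin.sum_univ_three, re_add, imI_add, imJ_add, imK_add, re_smul, imI_smul,
    imJ_smul, imK_smul] <;> simp [gradq, qe]

lemma gradq_inv {f : P3 → ℂ} {p : P3} (hf : DifferentiableAt ℝ f p) (hfp : f p ≠ 0) :
    gradq (fun x => (f x)⁻¹) p = -((f p)⁻¹ ^ 2) • gradq f p := by
  simp only [gradq_eq_sum, pd_inv hf hfp, Finset.smul_sum, smul_smul, neg_mul]

lemma Dq_gradq {u : P3 → ℂ} {Ω : Set P3} (hΩ : IsOpen Ω) (hu : ContDiffOn ℝ 2 u Ω)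
    {p : P3} (hp : p ∈ Ω) : Dq (gradq u) p = -qC (lap3 u p) := by
  have hcomm := pd_comm hΩ hu hp
  ext <;> simp only [Dq, Fin.sum_univ_three, re_add, imI_add, imJ_add, imK_add, re_mul, imI_mul,
    imJ_mul, imK_mul, re_neg, imI_neg, imJ_neg, imK_neg] <;>
    simp [pdq, gradq, qe, qC, lap3, Fin.sum_univ_three, pd_const, hcomm 1 2, hcomm 0 2, hcomm 0 1]
  ring

lemma QContDiffOn.differentiableAt {W : P3 → ℍ[ℂ]} {Ω : Set P3} (hW : QContDiffOn 1 W Ω)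
    (hΩ : IsOpen Ω) {p : P3} (hp : p ∈ Ω) :
    DifferentiableAt ℝ (fun x => (W x).re) p ∧ DifferentiableAt ℝ (fun x => (W x).imI) p ∧
      DifferentiableAt ℝ (fun x => (W x).imJ) p ∧ DifferentiableAt ℝ (fun x => (W x).imK) p :=
  let h {w : P3 → ℂ} (hw : ContDiffOn ℝ 1 w Ω) : DifferentiableAt ℝ w p :=
    (hw.contDiffAt (hΩ.mem_nhds hp)).differentiableAt one_ne_zero
  ⟨h hW.1, h hW.2.1, h hW.2.2.1, h hW.2.2.2⟩

lemma qContDiffOn_gradq {u : P3 → ℂ} {Ω : Set P3} (hΩ : IsOpen Ω) (hu : ContDiffOn ℝ 2 u Ω) :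
    QContDiffOn 1 (gradq u) Ω :=
  ⟨contDiffOn_const, pd_contDiffOn hΩ hu 0, pd_contDiffOn hΩ hu 1, pd_contDiffOn hΩ hu 2⟩

lemma pdq_smul {g : P3 → ℂ} {W : P3 → ℍ[ℂ]} {Ω : Set P3} (hΩ : IsOpen Ω) {p : P3} (hp : p ∈ Ω)
    (hg : DifferentiableAt ℝ g p) (hW : QContDiffOn 1 W Ω) (k : Fin 3) :
    pdq k (fun x => g x • W x) p = pd k g p • W p + g p • pdq k W p := by
  obtain ⟨h₀, h₁, h₂, h₃⟩ := hW.differentiableAt hΩ hp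
  ext
  exacts [pd_mul hg h₀ k, pd_mul hg h₁ k, pd_mul hg h₂ k, pd_mul hg h₃ k]

lemma Dq_smul {g : P3 → ℂ} {W : P3 → ℍ[ℂ]} {Ω : Set P3} (hΩ : IsOpen Ω) {p : P3} (hp : p ∈ Ω)
    (hg : DifferentiableAt ℝ g p) (hW : QContDiffOn 1 W Ω) :
    Dq (fun x => g x • W x) p = gradq g p * W p + g p • Dq W p := by
  simp only [Dq, pdq_smul hΩ hp hg hW, gradq_eq_sum, mul_add, Finset.sum_add_distrib,
    Finset.sum_mul, Finset.smul_sum, mul_smul_comm, smul_mul_assoc]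

/-- if ρ is harmonic and ⟨∇f, ∇ρ⟩ = 0, then F = fDρ solves
    DF + F·(Df/f) = 0 and G = (1/f)Dρ solves DG − G·(Df/f) = 0. -/
theorem statement18 (Ω : Set P3) (hΩ : IsOpen Ω)
    (f : P3 → ℂ) (hf : ContDiffOn ℝ 1 f Ω) (hf0 : ∀ p ∈ Ω, f p ≠ 0)
    (ρ : P3 → ℝ) (hρ : ContDiffOn ℝ 2 ρ Ω)
    (hharm : ∀ p ∈ Ω, lap3 (fun x => (ρ x : ℂ)) p = 0)
    (horth : ∀ p ∈ Ω, dotq (gradq f p) (gradq (fun x => (ρ x : ℂ)) p) = 0) :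
    ∀ p ∈ Ω,
      (Dq (fun x => f x • gradq (fun y => (ρ y : ℂ)) x) p
          + (f p • gradq (fun y => (ρ y : ℂ)) p) * DfF f p = 0) ∧
      (Dq (fun x => (f x)⁻¹ • gradq (fun y => (ρ y : ℂ)) x) p
          - ((f p)⁻¹ • gradq (fun y => (ρ y : ℂ)) p) * DfF f p = 0) := by
  intro p hp
  set u : P3 → ℂ := fun x => (ρ x : ℂ)
  have hu : ContDiffOn ℝ 2 u Ω := Complex.ofRealCLM.contDiff.comp_contDiffOn hρ
  have hfp : DifferentiableAt ℝ f p :=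
    (hf.contDiffAt (hΩ.mem_nhds hp)).differentiableAt one_ne_zero
  have hgrad := qContDiffOn_gradq hΩ hu
  have hDu : Dq (gradq u) p = 0 := by
    rw [Dq_gradq hΩ hu hp, hharm p hp, qC_zero, neg_zero]
  have hanti : gradq f p * gradq u p + gradq u p * gradq f p = 0 := by
    rw [mul_add_mul_swap_of_re_eq_zero rfl rfl, horth p hp, mul_zero, qC_zero]
  constructor
  · rw [Dq_smul hΩ hp hfp hgrad, hDu, DfF, smul_mul_smul_comm, mul_inv_cancel₀ (hf0 p hp),
      one_smul, smul_zero, add_zero]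
    exact hanti
  · rw [Dq_smul hΩ hp (hfp.fun_inv (hf0 p hp)) hgrad, hDu, gradq_inv hfp (hf0 p hp), DfF,
      smul_mul_smul_comm, smul_mul_assoc, smul_zero, add_zero]
    linear_combination (norm := module) (-(f p)⁻¹ ^ 2) • hanti
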